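/- arXiv:1707.04581 — 6 statements merged into one kernel-verified Lean document; each statement's English description precedes it below -/
import Mathlib

section
/- For all integers n ≥ 2 and 1 ≤ k ≤ n/2, we have k·C(n,k) − 2·∑_{i=0}^{k-1} ∑_{j=0}^{i} C(n,j) = (n − 2k)·∑_{i=0}^{k-1} C(n,i). -/
open Finset

lemma keyid (n k : ℕ) (h : k ≤ n) :
    ((k : ℤ) + 1) * n.choose (k + 1) = ((n : ℤ) - k) * n.choose k := by
  have h2 : ((n - k : ℕ) : ℤ) = (n:ℤ) - k := by omega
  rw [← h2]
  exact_mod_cast by rw [Nat.mul_comm, Nat.choose_succ_right_eq, Nat.mul_comm]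

/-- For all integers `n ≥ 2` and `1 ≤ k ≤ ⌊n/2⌋`,
`k·C(n,k) − 2·∑_{i=0}^{k-1} ∑_{j=0}^{i} C(n,j) = (n − 2k)·∑_{i=0}^{k-1} C(n,i)`. -/
theorem stmt3 (n k : ℕ) (hn : 2 ≤ n) (hk1 : 1 ≤ k) (hk2 : k ≤ n / 2) :
    (k : ℤ) * n.choose k
        - 2 * ∑ i ∈ Finset.range k, ∑ j ∈ Finset.range (i + 1), (n.choose j : ℤ)
      = ((n : ℤ) - 2 * k) * ∑ i ∈ Finset.range k, (n.choose i : ℤ) := by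
  induction k with
  | zero => omega
  | succ k ih =>
    rcases Nat.eq_zero_or_pos k with rfl | hk
    · simp [Nat.choose_one_right]
    · have hk2' : k ≤ n / 2 := by omega
      have ihh := ih hk hk2'
      have hkn : k ≤ n := le_trans hk2' (Nat.div_le_self n 2)
      have key := keyid n k hkn
      rw [Finset.sum_range_succ, Finset.sum_range_succ]
      push_cast at *
      linear_combination ihh + key
end

section
/- Let 0 ≤ i ≤ j with i + j ≤ n. The set-inclusion matrix W_{i,j}(n), whose rows are indexed by i-subsets and columns by j-subsets of {1,...,n}, with entry 1 if the row subset is contained in the column subset and 0 otherwise, has rank C(n,i) over ℚ. -/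
/-!
Let `W = W_{i,j}` and look for a right inverse of the form `B t s' = x (i - #(t ∩ s'))`. For
`i`-sets `s, s'` with `r = #(s' \ s)`, the entry `(W * B) s s' = ∑_{t ⊇ s} x (i - #(t ∩ s'))` is
`∑_{d ≤ r} N(r, d) x (r - d)`, where `N(r, d)` counts the `(j - i)`-subsets of `sᶜ` meeting
`s' \ s` in `d` points. This system is lower triangular in `x` with diagonal
`N(r, 0) = C(n - i - r, j - i)`, nonzero because `i + j ≤ n`; solving it by forward
substitution gives `W * B = 1`, so `W` has full row rank `C(n, i)`.
-/

open Finset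

theorem Matrix.rank_eq_card_height_of_mul_eq_one {R m n : Type*} [CommSemiring R]
    [StrongRankCondition R] [Fintype m] [Fintype n] [DecidableEq m] {A : Matrix m n R}
    {B : Matrix n m R} (h : A * B = 1) : A.rank = Fintype.card m :=
  le_antisymm A.rank_le_card_height (by simpa [h] using A.rank_mul_le_left B)

section TriangularSolve

variable {K : Type*} [Field K]

noncomputable def triangularSolve (a : ℕ → ℕ → K) (c : ℕ → K) : ℕ → K
  | r => (c r - ∑ d ∈ (range r).attach, a r (d + 1) * triangularSolve a c (r - (d + 1))) /
      a r 0
  termination_by r => r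
  decreasing_by have := mem_range.1 d.2; omega

theorem sum_range_mul_triangularSolve (a : ℕ → ℕ → K) (c : ℕ → K) {r : ℕ} (h : a r 0 ≠ 0) :
    ∑ d ∈ range (r + 1), a r d * triangularSolve a c (r - d) = c r := by
  rw [sum_range_succ', Nat.sub_zero, triangularSolve.eq_1 a c r, mul_div_cancel₀ _ h,
    sum_attach (range r) fun d => a r (d + 1) * triangularSolve a c (r - (d + 1))]
  ring

end TriangularSolve

-- The number of `m`-subsets of a `c`-set meeting a fixed `r`-subset in exactly `d` points.
def interCount (m c r d : ℕ) : ℕ :=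
  if d ≤ m then r.choose d * (c - r).choose (m - d) else 0

namespace Finset

variable {α M : Type*} [DecidableEq α] [AddCommMonoid M]

theorem card_filter_powersetCard_card_inter {C w : Finset α} (hw : w ⊆ C) {m d : ℕ}
    (hd : d ≤ m) :
    #{u ∈ C.powersetCard m | #(u ∩ w) = d} = (#w).choose d * (#(C \ w)).choose (m - d) := by
  rw [← card_powersetCard, ← card_powersetCard, ← card_product]
  refine card_nbij' (fun u => (u ∩ w, u \ w)) (fun p => p.1 ∪ p.2) ?_ ?_ ?_ ?_
  · intro u hu
    simp only [coe_filter, mem_powersetCard, coe_product, Set.mem_prod, mem_coe] at hu ⊢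
    obtain ⟨⟨huC, hum⟩, hud⟩ := hu
    refine ⟨⟨inter_subset_right, hud⟩, sdiff_subset_sdiff huC le_rfl, ?_⟩
    have := card_inter_add_card_sdiff u w
    omega
  · rintro ⟨A, B⟩ hp
    simp only [coe_filter, mem_powersetCard, coe_product, Set.mem_prod, mem_coe] at hp ⊢
    obtain ⟨⟨hA, hAd⟩, hB, hBm⟩ := hp
    have hBw : Disjoint B w := (subset_sdiff.1 hB).2
    refine ⟨⟨union_subset (hA.trans hw) (hB.trans sdiff_subset), ?_⟩, ?_⟩
    · rw [card_union_of_disjoint (disjoint_of_subset_left hA hBw.symm)]; omega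
    · rw [union_inter_distrib_right, inter_eq_left.2 hA, disjoint_iff_inter_eq_empty.1 hBw,
        union_empty, hAd]
  · intro u _
    exact sup_inf_sdiff u w
  · rintro ⟨A, B⟩ hp
    simp only [coe_product, Set.mem_prod, mem_coe, mem_powersetCard] at hp
    have hBw : Disjoint B w := (subset_sdiff.1 hp.2.1).2
    simp only [union_inter_distrib_right, inter_eq_left.2 hp.1.1,
      disjoint_iff_inter_eq_empty.1 hBw, union_empty, union_sdiff_distrib,
      sdiff_eq_empty_iff_subset.2 hp.1.1, empty_union, hBw.sdiff_eq_left]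

theorem sum_powersetCard_comp_card_inter {C w : Finset α} (hw : w ⊆ C) (m : ℕ) (f : ℕ → M) :
    ∑ u ∈ C.powersetCard m, f #(u ∩ w) = ∑ d ∈ range (#w + 1), interCount m #C #w d • f d := by
  rw [← sum_fiberwise_of_maps_to (g := fun u => #(u ∩ w)) (t := range (#w + 1))
    fun u _ => mem_range_succ_iff.2 (card_le_card inter_subset_right)]
  refine sum_congr rfl fun d _ => ?_
  rw [sum_congr rfl fun u hu => congrArg f (mem_filter.1 hu).2, sum_const, interCount]
  split_ifs with hd
  · rw [card_filter_powersetCard_card_inter hw hd, card_sdiff_of_subset hw]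
  · rw [card_eq_zero.2 (filter_eq_empty_iff.2 fun u hu hud => hd ?_), zero_smul]
    exact hud ▸ (card_le_card inter_subset_left).trans_eq (mem_powersetCard.1 hu).2

theorem sum_filter_powersetCard_superset [Fintype α] {s : Finset α} {j : ℕ} (hs : #s ≤ j)
    (g : Finset α → M) :
    ∑ t ∈ univ.powersetCard j with s ⊆ t, g t = ∑ u ∈ sᶜ.powersetCard (j - #s), g (s ∪ u) := by
  refine sum_nbij' (· \ s) (s ∪ ·) (fun t ht => ?_) (fun u hu => ?_) (fun t ht => ?_)
    (fun u hu => ?_) (fun t ht => ?_)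
  · rw [mem_filter, mem_powersetCard_univ] at ht
    rw [mem_powersetCard, card_sdiff_of_subset ht.2, ht.1]
    exact ⟨subset_compl_iff_disjoint_left.2 disjoint_sdiff, rfl⟩
  · rw [mem_powersetCard, subset_compl_iff_disjoint_left] at hu
    rw [mem_filter, mem_powersetCard_univ, card_union_of_disjoint hu.1, hu.2]
    exact ⟨by omega, subset_union_left⟩
  · exact union_sdiff_of_subset (mem_filter.1 ht).2
  · exact union_sdiff_cancel_left (subset_compl_iff_disjoint_left.1 (mem_powersetCard.1 hu).1)
  · rw [union_sdiff_of_subset (mem_filter.1 ht).2]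

theorem card_union_inter (s s' u : Finset α) :
    #((s ∪ u) ∩ s') = #(s ∩ s') + #(u ∩ (s' \ s)) := by
  rw [← card_union_of_disjoint]
  · congr 1; ext x; simp only [mem_inter, mem_union, mem_sdiff]; tauto
  · exact disjoint_left.2 fun x hx hx' => (mem_sdiff.1 (mem_inter.1 hx').2).2 (mem_inter.1 hx).1

theorem sum_filter_superset_comp_card_inter [Fintype α] {s s' : Finset α} {i j : ℕ}
    (hij : i ≤ j) (hs : #s = i) (hs' : #s' = i) (f : ℕ → M) :
    ∑ t ∈ univ.powersetCard j with s ⊆ t, f (i - #(t ∩ s')) =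
      ∑ d ∈ range (#(s' \ s) + 1),
        interCount (j - i) (Fintype.card α - i) #(s' \ s) d • f (#(s' \ s) - d) := by
  have hsplit : #(s' ∩ s) + #(s' \ s) = i := hs' ▸ card_inter_add_card_sdiff s' s
  rw [sum_filter_powersetCard_superset (hs.trans_le hij), hs, ← hs, ← card_compl,
    ← sum_powersetCard_comp_card_inter (subset_compl_iff_disjoint_left.2 disjoint_sdiff)]
  refine sum_congr rfl fun u _ => congrArg f ?_
  rw [card_union_inter, inter_comm s s']
  omega

end Finset

def inclusionMatrix (R α : Type*) [Zero R] [One R] [DecidableEq α] (i j : ℕ) :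
    Matrix {s : Finset α // #s = i} {t : Finset α // #t = j} R :=
  fun s t => if s.1 ⊆ t.1 then 1 else 0

section InclusionMatrix

variable (K : Type*) {α : Type*} [Field K] [CharZero K] [Fintype α] [DecidableEq α]

theorem exists_inclusionMatrix_mul_eq_one {i j : ℕ} (hij : i ≤ j)
    (hn : i + j ≤ Fintype.card α) :
    ∃ B : Matrix {t : Finset α // #t = j} {s : Finset α // #s = i} K,
      inclusionMatrix K α i j * B = 1 := by
  set a : ℕ → ℕ → K := fun r d => interCount (j - i) (Fintype.card α - i) r d
  set x := triangularSolve a fun r => if r = 0 then 1 else 0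
  set B : Matrix {t : Finset α // #t = j} {s : Finset α // #s = i} K :=
    Matrix.of fun t s' => x (i - #(t.1 ∩ s'.1))
  refine ⟨B, ?_⟩
  ext ⟨s, hs⟩ ⟨s', hs'⟩
  have hr : #(s' \ s) ≤ i := hs' ▸ card_le_card sdiff_subset
  have hdiag : a #(s' \ s) 0 ≠ 0 := by
    simp only [a, interCount, zero_le, if_true, Nat.choose_zero_right, one_mul, Nat.sub_zero]
    exact Nat.cast_ne_zero.2 (Nat.choose_pos (by omega)).ne'
  have hsub : #(s' \ s) = 0 ↔ s = s' := by
    rw [card_eq_zero, sdiff_eq_empty_iff_subset]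
    exact ⟨fun h => (eq_of_subset_of_card_le h (by omega)).symm, fun h => h ▸ subset_rfl⟩
  calc (inclusionMatrix K α i j * B) ⟨s, hs⟩ ⟨s', hs'⟩
      = ∑ t ∈ univ.powersetCard j with s ⊆ t, x (i - #(t ∩ s')) := by
        simp only [Matrix.mul_apply, inclusionMatrix, B, Matrix.of_apply, ite_mul, one_mul,
          zero_mul]
        rw [sum_filter, sum_subtype _ fun t => mem_powersetCard_univ]
    _ = ∑ d ∈ range (#(s' \ s) + 1), a #(s' \ s) d * x (#(s' \ s) - d) := by
        rw [sum_filter_superset_comp_card_inter hij hs hs']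
        simp only [nsmul_eq_mul, a]
    _ = (1 : Matrix {s : Finset α // #s = i} {s : Finset α // #s = i} K) ⟨s, hs⟩ ⟨s', hs'⟩ := by
        rw [sum_range_mul_triangularSolve a _ hdiag, Matrix.one_apply]
        simp only [hsub, Subtype.mk.injEq]

theorem inclusionMatrix_rank {i j : ℕ} (hij : i ≤ j) (hn : i + j ≤ Fintype.card α) :
    (inclusionMatrix K α i j).rank = (Fintype.card α).choose i := by
  obtain ⟨B, hB⟩ := exists_inclusionMatrix_mul_eq_one K hij hn
  rw [Matrix.rank_eq_card_height_of_mul_eq_one hB, Fintype.card_finset_len]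

end InclusionMatrix

/-- de Caen's theorem: for `0 ≤ i ≤ j` with `i + j ≤ n`, the set-inclusion
matrix `W_{i,j}(n)` (rows indexed by `i`-subsets, columns by `j`-subsets of an
`n`-set, entry `1` iff the row subset is contained in the column subset) has
rank `C(n,i)` over `ℚ`. -/
theorem stmt11 (n i j : ℕ) (hij : i ≤ j) (hn : i + j ≤ n) :
    Matrix.rank (fun (s : {s : Finset (Fin n) // s.card = i})
        (t : {t : Finset (Fin n) // t.card = j}) =>
          if s.1 ⊆ t.1 then (1 : ℚ) else 0) = n.choose i := by
  have := inclusionMatrix_rank ℚ (α := Fin n) hij (by rwa [Fintype.card_fin])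
  rwa [Fintype.card_fin] at this
end

section
/- For 1 ≤ k ≤ ⌊n/2⌋ and k < r < n−k, the space of ℚ-valued Minkowski weights on codimension-r cones of the normal fan of the hypersimplex Δ(k,n) has dimension ∑_{i=0}^{k-1} C(n,i). -/
open Finset

/-- Pairs `(I,J)` of disjoint subsets of `{1,…,n}` with `|I|+|J| = n−r−1`,
`|I| < k`, `|J| < n−k`, indexing codimension-`r` cones of the normal fan of
the hypersimplex `Δ(k,n)`. -/
def Pairs (n k r : ℕ) : Type :=
  {p : Finset (Fin n) × Finset (Fin n) //
    Disjoint p.1 p.2 ∧ p.1.card + p.2.card = n - r - 1 ∧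
      p.1.card < k ∧ p.2.card < n - k}

/-- The three balancing conditions defining a Minkowski weight of
codimension `r` on the normal fan of `Δ(k,n)`. -/
def IsMinkowskiWeight (n k r : ℕ) (c : Pairs n k r → ℚ) : Prop :=
  (∀ (p q s t : Pairs n k r) (A B : Finset (Fin n)) (x y : Fin n),
      x ≠ y → x ∉ A ∪ B → y ∉ A ∪ B → A.card < k - 1 → B.card < n - k - 1 →
      p.1 = (insert x A, B) → q.1 = (insert y A, B) →
      s.1 = (A, insert x B) → t.1 = (A, insert y B) →
      c p - c q = c s - c t) ∧
  (∀ p q : Pairs n k r, p.1.1.card = k - 1 → p.1.1 = q.1.1 → c p = c q) ∧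
  (∀ p q : Pairs n k r, p.1.2.card = n - k - 1 → p.1.2 = q.1.2 → c p = c q)

/-- The space of `ℚ`-valued Minkowski weights on codimension-`r` cones of the
normal fan of `Δ(k,n)`, as a `ℚ`-subspace of the function space. -/
def MinkowskiWeights (n k r : ℕ) : Submodule ℚ (Pairs n k r → ℚ) where
  carrier := {c | IsMinkowskiWeight n k r c}
  zero_mem' := by
    refine ⟨fun _ _ _ _ _ _ _ _ _ _ _ _ _ _ _ _ => by simp,
      fun _ _ _ _ => rfl, fun _ _ _ _ => rfl⟩
  add_mem' := by
    rintro a b ⟨ha1, ha2, ha3⟩ ⟨hb1, hb2, hb3⟩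
    refine ⟨fun p q s t A B x y h1 h2 h3 h4 h5 h6 h7 h8 h9 => ?_,
      fun p q h h' => ?_, fun p q h h' => ?_⟩
    · have := ha1 p q s t A B x y h1 h2 h3 h4 h5 h6 h7 h8 h9
      have := hb1 p q s t A B x y h1 h2 h3 h4 h5 h6 h7 h8 h9
      simp only [Pi.add_apply]; linarith
    · simp only [Pi.add_apply, ha2 p q h h', hb2 p q h h']
    · simp only [Pi.add_apply, ha3 p q h h', hb3 p q h h']
  smul_mem' := by
    rintro m a ⟨ha1, ha2, ha3⟩
    refine ⟨fun p q s t A B x y h1 h2 h3 h4 h5 h6 h7 h8 h9 => ?_,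
      fun p q h h' => ?_, fun p q h h' => ?_⟩
    · have := ha1 p q s t A B x y h1 h2 h3 h4 h5 h6 h7 h8 h9
      simp only [Pi.smul_apply, smul_eq_mul]
      linear_combination m * this
    · simp only [Pi.smul_apply, ha2 p q h h']
    · simp only [Pi.smul_apply, ha3 p q h h']

/-!
A Minkowski weight is determined by its values on the canonical pairs `(I, partner r I)`,
one for each `I` with `#I < k`: the balancing relation (i) trades `c (I, J)` for values at pairs
whose first component is larger or whose second component is closer to `partner r I`, and (ii)
settles the case `#I = k - 1`. Conversely every `h` on the sets of size `< k` gives the weight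
`c (I, J) = ∑_{I ⊆ S ⊆ I ∪ J, #S < k} h S`, whose canonical values depend unitriangularly on `h`.
Hence the weights have the dimension of the space of functions on `{S | #S < k}`.
-/

theorem card_subtype_card_lt {α : Type*} [Fintype α] (k : ℕ) :
    Fintype.card {S : Finset α // #S < k} = ∑ i ∈ range k, (Fintype.card α).choose i := by
  rw [Fintype.card_subtype, card_eq_sum_card_fiberwise (f := card) (t := range k)
    (fun S hS => by simpa using hS)]
  refine sum_congr rfl fun i hi => ?_
  rw [filter_filter, ← card_univ, ← card_powersetCard, powersetCard_eq_filter, powerset_univ]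
  congr 1
  refine filter_congr fun S _ => ?_
  constructor
  · rintro ⟨-, rfl⟩; rfl
  · rintro rfl; exact ⟨mem_range.mp hi, rfl⟩

section UpSum

variable {α M : Type*} [Fintype α] [DecidableEq α] [AddCommMonoid M] {k : ℕ}

def upSum (h : {S : Finset α // #S < k} → M) (I J : Finset α) : M :=
  ∑ S with I ⊆ S.1 ∧ S.1 ⊆ I ∪ J, h S

variable (h : {S : Finset α // #S < k} → M)

theorem upSum_insert_right {A B : Finset α} {x : α} (hxA : x ∉ A) (hxB : x ∉ B) :
    upSum h A (insert x B) = upSum h A B + upSum h (insert x A) B := by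
  rw [upSum, ← sum_filter_add_sum_filter_not _ (fun S => x ∈ S.1), filter_filter,
    filter_filter, add_comm, upSum, upSum]
  congr 2 <;> refine filter_congr fun S _ => ?_ <;> grind

theorem upSum_eq_apply_of_forall_ssubset (I : {S : Finset α // #S < k}) {J : Finset α}
    (hJ : ∀ S : {S : Finset α // #S < k}, I.1 ⊂ S.1 → S.1 ⊆ I.1 ∪ J → h S = 0) :
    upSum h I.1 J = h I := by
  refine sum_eq_single_of_mem I (by simp) fun S hS hne => ?_
  rw [mem_filter] at hS
  exact hJ S (ssubset_of_subset_of_ne hS.2.1 fun he => hne (Subtype.ext he.symm)) hS.2.2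

theorem upSum_eq_apply_of_card_add_one_eq {I : Finset α} (hI : #I + 1 = k) (J : Finset α) :
    upSum h I J = h ⟨I, by omega⟩ := by
  refine upSum_eq_apply_of_forall_ssubset h ⟨I, by omega⟩ fun S hIS _ => absurd S.2 ?_
  have := card_lt_card hIS
  dsimp only at this
  omega

theorem eq_zero_of_upSum_eq_zero (J : Finset α → Finset α)
    (hJ : ∀ I : {S : Finset α // #S < k}, upSum h I.1 (J I.1) = 0) : h = 0 := by
  funext ⟨I, hI⟩
  refine strongDownwardInductionOn (p := fun I => ∀ hI : #I < k, h ⟨I, hI⟩ = 0) I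
    (fun I ih _ hI => ?_) hI.le hI
  rw [← hJ ⟨I, hI⟩, upSum_eq_apply_of_forall_ssubset]
  exact fun S hIS _ => ih S.2.le hIS S.2

end UpSum

variable {n k r : ℕ}

theorem exists_subset_compl_card_eq (r : ℕ) (I : Finset (Fin n)) :
    ∃ J ⊆ Iᶜ, #J = n - r - 1 - #I :=
  exists_subset_card_eq (by rw [card_compl, Fintype.card_fin]; omega)

noncomputable def partner (r : ℕ) (I : Finset (Fin n)) : Finset (Fin n) :=
  (exists_subset_compl_card_eq r I).choose

theorem partner_subset_compl (r : ℕ) (I : Finset (Fin n)) : partner r I ⊆ Iᶜ :=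
  (exists_subset_compl_card_eq r I).choose_spec.1

theorem card_partner (r : ℕ) (I : Finset (Fin n)) : #(partner r I) = n - r - 1 - #I :=
  (exists_subset_compl_card_eq r I).choose_spec.2

theorem disjoint_partner (r : ℕ) (I : Finset (Fin n)) : Disjoint I (partner r I) :=
  disjoint_compl_right.mono_right (partner_subset_compl r I)

noncomputable def Pairs.canonical (hkr : k < r) (hrn : r < n - k)
    (I : {S : Finset (Fin n) // #S < k}) : Pairs n k r :=
  ⟨(I.1, partner r I.1), disjoint_partner r I.1, by simp only [card_partner]; omega, I.2,
    by simp only [card_partner]; omega⟩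

theorem IsMinkowskiWeight.exchange {c : Pairs n k r → ℚ} (hc : IsMinkowskiWeight n k r c)
    (p : Pairs n k r) {x y : Fin n} (hx : x ∈ p.1.2) (hy : y ∉ p.1.1 ∪ p.1.2)
    (hI : #p.1.1 + 1 < k) :
    ∃ s t u : Pairs n k r, s.1 = (insert x p.1.1, p.1.2.erase x) ∧
      t.1 = (insert y p.1.1, p.1.2.erase x) ∧ u.1 = (p.1.1, insert y (p.1.2.erase x)) ∧
      c p = c s - c t + c u := by
  obtain ⟨⟨I, J⟩, hIJ, hcard, hIk, hJk⟩ := p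
  dsimp only at hcard hIk hJk hx hy hI ⊢
  rw [mem_union, not_or] at hy
  have hxI : x ∉ I := disjoint_right.mp hIJ hx
  have hyB : y ∉ J.erase x := fun h => hy.2 (mem_of_mem_erase h)
  have hB : #(J.erase x) + 1 = #J := card_erase_add_one hx
  have hIB : Disjoint I (J.erase x) := hIJ.mono_right (erase_subset x J)
  let s : Pairs n k r := ⟨(insert x I, J.erase x),
    disjoint_insert_left.mpr ⟨notMem_erase x J, hIB⟩,
    by simp only [card_insert_of_notMem hxI]; omega,
    by simp only [card_insert_of_notMem hxI]; omega, by simp only; omega⟩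
  let t : Pairs n k r := ⟨(insert y I, J.erase x), disjoint_insert_left.mpr ⟨hyB, hIB⟩,
    by simp only [card_insert_of_notMem hy.1]; omega,
    by simp only [card_insert_of_notMem hy.1]; omega, by simp only; omega⟩
  let u : Pairs n k r := ⟨(I, insert y (J.erase x)), disjoint_insert_right.mpr ⟨hy.1, hIB⟩,
    by simp only [card_insert_of_notMem hyB]; omega, hIk,
    by simp only [card_insert_of_notMem hyB]; omega⟩
  refine ⟨s, t, u, rfl, rfl, rfl, ?_⟩
  have := hc.1 s t ⟨(I, J), hIJ, hcard, hIk, hJk⟩ u I (J.erase x) x y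
    (by rintro rfl; exact hy.2 hx) (by simp [hxI]) (by simp [hy.1, hyB]) (by omega) (by omega)
    rfl rfl (by rw [insert_erase hx]) rfl
  linarith

theorem IsMinkowskiWeight.apply_eq_zero_of_forall_ssubset (hkr : k < r) (hrn : r < n - k)
    {c : Pairs n k r → ℚ} (hc : IsMinkowskiWeight n k r c)
    (h0 : ∀ I, c (Pairs.canonical hkr hrn I) = 0) {I : Finset (Fin n)}
    (hsup : ∀ p : Pairs n k r, I ⊂ p.1.1 → c p = 0) (p : Pairs n k r) (hp : p.1.1 = I) :
    c p = 0 := by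
  induction hd : #(p.1.2 \ partner r I) using Nat.strong_induction_on generalizing p with
  | _ d ih =>
  obtain ⟨hIJ, hcard, hIk, -⟩ := p.2
  rw [hp] at hIJ hcard hIk
  have hcan : c p = c (Pairs.canonical hkr hrn ⟨I, hIk⟩) → c p = 0 := fun h => h ▸ h0 _
  by_cases hJ : p.1.2 = partner r I
  · exact hcan (congrArg c (Subtype.ext (Prod.ext hp hJ)))
  by_cases htop : #I + 1 = k
  · exact hcan (hc.2.1 _ _ (by rw [hp]; omega) hp)
  have hJcard : #p.1.2 = #(partner r I) := by rw [card_partner]; omega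
  obtain ⟨x, hxJ, hxP⟩ : ∃ x ∈ p.1.2, x ∉ partner r I := by
    by_contra! h; exact hJ (eq_of_subset_of_card_le h hJcard.ge)
  obtain ⟨y, hyP, hyJ⟩ : ∃ y ∈ partner r I, y ∉ p.1.2 := by
    by_contra! h; exact hJ (eq_of_subset_of_card_le h hJcard.le).symm
  have hyI : y ∉ I := by simpa using partner_subset_compl r I hyP
  have hxI : x ∉ I := disjoint_right.mp hIJ hxJ
  obtain ⟨s, t, u, hs, ht, hu, hcp⟩ :=
    hc.exchange (y := y) p hxJ (by simp [hp, hyI, hyJ]) (by rw [hp]; omega)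
  have hu_lt : #(u.1.2 \ partner r I) < d := by
    rw [hu, ← hd]
    have : insert y (p.1.2.erase x) \ partner r I = (p.1.2 \ partner r I).erase x := by
      ext z; simp only [mem_sdiff, mem_insert, mem_erase]; grind
    exact this ▸ card_erase_lt_of_mem (mem_sdiff.mpr ⟨hxJ, hxP⟩)
  rw [hcp, hsup s (by rw [hs, hp]; exact ssubset_insert hxI),
    hsup t (by rw [ht, hp]; exact ssubset_insert hyI), ih _ hu_lt u (by rw [hu, hp]) rfl]
  norm_num

theorem IsMinkowskiWeight.eq_zero_of_canonical (hkr : k < r) (hrn : r < n - k)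
    {c : Pairs n k r → ℚ} (hc : IsMinkowskiWeight n k r c)
    (h0 : ∀ I, c (Pairs.canonical hkr hrn I) = 0) : c = 0 := by
  funext p
  exact strongDownwardInductionOn (p := fun I => ∀ p : Pairs n k r, p.1.1 = I → c p = 0) p.1.1
    (fun _ ih _ => hc.apply_eq_zero_of_forall_ssubset hkr hrn h0 fun q hq =>
      ih q.2.2.2.1.le hq q rfl)
    p.2.2.2.1.le p rfl

theorem isMinkowskiWeight_upSum (hkr : k < r) (hrn : r < n - k)
    (h : {S : Finset (Fin n) // #S < k} → ℚ) :
    IsMinkowskiWeight n k r fun p => upSum h p.1.1 p.1.2 := by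
  refine ⟨fun p q s t A B x y _ hx hy _ _ hp hq hs ht => ?_, fun p q hp hpq => ?_,
    fun p _ hp _ => absurd p.2.2.1 (by omega)⟩
  · rw [mem_union, not_or] at hx hy
    simp only [hp, hq, hs, ht, upSum_insert_right h hx.1 hx.2, upSum_insert_right h hy.1 hy.2]
    abel
  · have hk : #p.1.1 + 1 = k := by have := p.2.2.2.1; omega
    dsimp only
    rw [← hpq, upSum_eq_apply_of_card_add_one_eq h hk, upSum_eq_apply_of_card_add_one_eq h hk]

variable (n k r) in
def upSumMap (R : Type*) [CommSemiring R] :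
    ({S : Finset (Fin n) // #S < k} → R) →ₗ[R] (Pairs n k r → R) where
  toFun h p := upSum h p.1.1 p.1.2
  map_add' _ _ := funext fun _ => sum_add_distrib
  map_smul' _ _ := funext fun _ => by
    simp only [upSum, Pi.smul_apply, smul_sum, RingHom.id_apply]

theorem stmt12_general (n k r : ℕ) (hr1 : k < r) (hr2 : r < n - k) :
    Module.finrank ℚ (MinkowskiWeights n k r)
      = ∑ i ∈ Finset.range k, n.choose i := by
  let restrict := (LinearMap.funLeft ℚ ℚ (Pairs.canonical hr1 hr2)).comp
    (MinkowskiWeights n k r).subtype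
  let extend := (upSumMap n k r ℚ).codRestrict (MinkowskiWeights n k r)
    (isMinkowskiWeight_upSum hr1 hr2 ·)
  have h_restrict : Function.Injective restrict :=
    (injective_iff_map_eq_zero restrict).mpr fun c hc =>
      Subtype.ext (c.2.eq_zero_of_canonical hr1 hr2 (congrFun hc))
  have h_extend : Function.Injective extend :=
    (injective_iff_map_eq_zero extend).mpr fun h hh =>
      eq_zero_of_upSum_eq_zero h (partner r) fun I =>
        congrFun (congrArg Subtype.val hh) (Pairs.canonical hr1 hr2 I)
  have := Module.Finite.of_injective restrict h_restrict
  have h_le := LinearMap.finrank_le_finrank_of_injective h_restrict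
  have h_ge := LinearMap.finrank_le_finrank_of_injective h_extend
  rw [Module.finrank_fintype_fun_eq_card] at h_le h_ge
  simpa only [card_subtype_card_lt, Fintype.card_fin] using le_antisymm h_le h_ge

/-- For `1 ≤ k ≤ ⌊n/2⌋` and `k < r < n−k`, the space of `ℚ`-valued Minkowski
weights on codimension-`r` cones of the normal fan of `Δ(k,n)` has dimension
`∑_{i=0}^{k-1} C(n,i)`. -/
theorem stmt12 (n k r : ℕ) (hk1 : 1 ≤ k) (hk2 : k ≤ n / 2)
    (hr1 : k < r) (hr2 : r < n - k) :
    Module.finrank ℚ (MinkowskiWeights n k r)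
      = ∑ i ∈ Finset.range k, n.choose i :=
  stmt12_general n k r hr1 hr2
end

section
/- For 1 ≤ k ≤ ⌊n/2⌋ and n−k ≤ r ≤ n−1, the space of ℚ-valued Minkowski weights on codimension-r cones of the normal fan of Δ(k,n) has dimension ∑_{i=0}^{n-r-1} C(n,i). -/
open Finset

/-!
In this range every pair `(I, J)` with `|I| + |J| = m := n - r - 1` is admissible and conditions
(ii), (iii) are vacuous, so a Minkowski weight is a function `c` on disjoint pairs with
`|I| + |J| = m` satisfying (i). Every function `w` on the subsets of size at most `m` gives one,
`c (I, J) = ∑_{I ⊆ U ⊆ I ∪ J} w U`, and `w` is recovered by Möbius inversion: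
`w S = ∑_{T ⊆ J} (-1)^|T| c (S ∪ T, J \ T)` for any `J` disjoint from `S` with `|S| + |J| = m`.
Condition (i) makes this alternating sum invariant under exchanging one element of `J`, hence
independent of `J`, and the two constructions are mutually inverse. The dimension is therefore
the number of subsets of `{1, …, n}` of size at most `m`.
-/

namespace Finset

variable {α : Type*} [DecidableEq α]

theorem disjoint_union_sdiff {S B T : Finset α} (hSB : Disjoint S B) :
    Disjoint (S ∪ T) (B \ T) :=
  disjoint_union_left.2 ⟨hSB.mono_right sdiff_subset, disjoint_sdiff⟩

theorem card_union_add_card_sdiff_of_subset {S B T : Finset α} (hSB : Disjoint S B)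
    (hT : T ⊆ B) : #(S ∪ T) + #(B \ T) = #S + #B := by
  rw [card_union_of_disjoint (hSB.mono_right hT), card_sdiff_of_subset hT]
  have := card_le_card hT
  omega

theorem eq_of_forall_insert_eq {β : Type*} (S : Finset α) (d : ℕ) (F : Finset α → β)
    (hF : ∀ ⦃B x y⦄, Disjoint S B → x ∉ S ∪ B → y ∉ S ∪ B → #B + 1 = d →
      F (insert x B) = F (insert y B))
    {J J' : Finset α} (hJ : Disjoint S J) (hJ' : Disjoint S J') (hcard : #J = d)
    (hcard' : #J' = d) : F J = F J' := by
  obtain ⟨i, hi⟩ : ∃ i, #(J \ J') = i := ⟨_, rfl⟩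
  induction i generalizing J with
  | zero =>
    rw [card_eq_zero, sdiff_eq_empty_iff_subset] at hi
    rw [eq_of_subset_of_card_le hi (by omega)]
  | succ i ih =>
    obtain ⟨x, hx⟩ : (J \ J').Nonempty := card_pos.1 (by omega)
    obtain ⟨y, hy⟩ : (J' \ J).Nonempty :=
      card_pos.1 (by rw [← card_sdiff_comm (hcard.trans hcard'.symm)]; omega)
    rw [mem_sdiff] at hx hy
    have hxB : x ∉ S ∪ J.erase x := by
      simp [disjoint_left.1 hJ.symm hx.1]
    have hyB : y ∉ S ∪ J.erase x := by
      simp [disjoint_left.1 hJ'.symm hy.1, hy.2]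
    have hB : #(J.erase x) + 1 = d := by
      rw [card_erase_of_mem hx.1, Nat.sub_add_cancel (card_pos.2 ⟨x, hx.1⟩), hcard]
    rw [← insert_erase hx.1, hF (hJ.mono_right (erase_subset x J)) hxB hyB hB]
    refine ih ?_ ?_ ?_
    · exact disjoint_insert_right.2 ⟨fun h => hyB (mem_union_left _ h),
        hJ.mono_right (erase_subset x J)⟩
    · rw [card_insert_of_notMem fun h => hyB (mem_union_right _ h)]; omega
    · rw [insert_sdiff_of_mem _ hy.1, erase_sdiff_comm, card_erase_of_mem (mem_sdiff.2 hx)]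
      omega

theorem exists_disjoint_card_add_eq [Fintype α] {S : Finset α} {m : ℕ} (hS : #S ≤ m)
    (hm : m ≤ Fintype.card α) : ∃ J, Disjoint S J ∧ #S + #J = m := by
  obtain ⟨J, hJ, hc⟩ := exists_subset_card_eq (s := Sᶜ) (n := m - #S) (by rw [card_compl]; omega)
  exact ⟨J, disjoint_of_subset_right hJ disjoint_compl_right, by omega⟩

theorem sum_powerset_sum_powerset_sdiff {M : Type*} [AddCommMonoid M] (J : Finset α)
    (f : Finset α → Finset α → M) :
    ∑ T ∈ J.powerset, ∑ T' ∈ (J \ T).powerset, f T T' =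
      ∑ U ∈ J.powerset, ∑ T ∈ U.powerset, f T (U \ T) := by
  rw [sum_sigma', sum_sigma']
  refine sum_bij' (fun x _ => ⟨x.1 ∪ x.2, x.1⟩) (fun x _ => ⟨x.2, x.1 \ x.2⟩) ?_ ?_ ?_ ?_ ?_ <;>
    rintro ⟨T, T'⟩ h <;> simp only [mem_sigma, mem_powerset, subset_sdiff] at h ⊢
  · exact ⟨union_subset h.1 h.2.1, subset_union_left⟩
  · exact ⟨h.2.trans h.1, sdiff_subset.trans h.1, disjoint_sdiff_self_left⟩
  · simp [union_sdiff_cancel_left h.2.2.symm]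
  · simp [union_sdiff_of_subset h.2]
  · simp [union_sdiff_cancel_left h.2.2.symm]

section Ring

variable {R : Type*} [Ring R]

theorem sum_powerset_neg_one_pow (U : Finset α) :
    ∑ T ∈ U.powerset, (-1 : R) ^ #T = if U = ∅ then 1 else 0 := by
  exact_mod_cast congrArg (Int.cast : ℤ → R) sum_powerset_neg_one_pow_card

theorem sum_powerset_neg_one_pow_mul_sum_powerset_sdiff (J : Finset α)
    (g : Finset α → R) :
    ∑ T ∈ J.powerset, (-1 : R) ^ #T * ∑ T' ∈ (J \ T).powerset, g (T ∪ T') = g ∅ := by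
  simp_rw [mul_sum]
  rw [sum_powerset_sum_powerset_sdiff]
  calc _ = ∑ U ∈ J.powerset, (∑ T ∈ U.powerset, (-1 : R) ^ #T) * g U := by
        refine sum_congr rfl fun U _ => ?_
        rw [sum_mul]
        exact sum_congr rfl fun T hT => by rw [union_sdiff_of_subset (mem_powerset.1 hT)]
    _ = g ∅ := by simp [sum_powerset_neg_one_pow]

theorem sum_powerset_sum_powerset_sdiff_neg_one_pow_mul (J : Finset α)
    (g : Finset α → R) :
    ∑ T ∈ J.powerset, ∑ T' ∈ (J \ T).powerset, (-1 : R) ^ #T' * g (T ∪ T') = g ∅ := by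
  rw [sum_comm' (t' := J.powerset) (s' := fun T' => (J \ T').powerset)]
  · simp_rw [union_comm _ (_ : Finset α), ← mul_sum]
    exact sum_powerset_neg_one_pow_mul_sum_powerset_sdiff J g
  · intro T T'
    simp only [mem_powerset, subset_sdiff, disjoint_comm (a := T)]
    tauto

end Ring

end Finset

theorem Fintype.card_finset_card_le {α : Type*} [Fintype α] (m : ℕ) :
    Fintype.card {S : Finset α // #S ≤ m} = ∑ i ∈ range (m + 1), (Fintype.card α).choose i := by
  rw [Fintype.card_subtype, card_eq_sum_card_fiberwise (f := (#·)) (t := range (m + 1))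
    (fun S hS => by simpa [Nat.lt_succ_iff] using hS)]
  refine Finset.sum_congr rfl fun i hi => ?_
  rw [mem_range] at hi
  rw [filter_filter, ← Fintype.card_finset_len, Fintype.card_subtype]
  congr 2
  ext S
  omega

section IntervalSum

variable {α R : Type*} [DecidableEq α] [CommRing R]

def intervalSum (w : Finset α → R) (I J : Finset α) : R :=
  ∑ T ∈ J.powerset, w (I ∪ T)

def mobiusSum (f : Finset α → Finset α → R) (S J : Finset α) : R :=
  ∑ T ∈ J.powerset, (-1) ^ #T * f (S ∪ T) (J \ T)

theorem mobiusSum_intervalSum (w : Finset α → R) (S J : Finset α) :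
    mobiusSum (intervalSum w) S J = w S := by
  simpa [mobiusSum, intervalSum, union_assoc] using
    sum_powerset_neg_one_pow_mul_sum_powerset_sdiff J (fun X => w (S ∪ X))

theorem intervalSum_mobiusSum {f : Finset α → Finset α → R} {v : Finset α → R}
    {I J : Finset α} (hv : ∀ T ⊆ J, v (I ∪ T) = mobiusSum f (I ∪ T) (J \ T)) :
    intervalSum v I J = f I J := by
  have := sum_powerset_sum_powerset_sdiff_neg_one_pow_mul J (fun X => f (I ∪ X) (J \ X))
  rw [union_empty, sdiff_empty] at this
  rw [← this, intervalSum]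
  refine sum_congr rfl fun T hT => ?_
  simp [hv T (mem_powerset.1 hT), mobiusSum, union_assoc, sdiff_sdiff_left]

theorem intervalSum_insert_right (w : Finset α → R) (A : Finset α) {B : Finset α} {x : α}
    (hx : x ∉ B) :
    intervalSum w A (insert x B) = intervalSum w A B + intervalSum w (insert x A) B := by
  simp [intervalSum, sum_powerset_insert hx, union_insert, insert_union]

def IsBalanced (m : ℕ) (f : Finset α → Finset α → R) : Prop :=
  ∀ ⦃A B : Finset α⦄ ⦃x y : α⦄, Disjoint A B → x ∉ A ∪ B → y ∉ A ∪ B → #A + #B + 1 = m →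
    f (insert x A) B - f (insert y A) B = f A (insert x B) - f A (insert y B)

theorem isBalanced_intervalSum (m : ℕ) (w : Finset α → R) : IsBalanced m (intervalSum w) := by
  intro A B x y _ hx hy _
  rw [intervalSum_insert_right w A (notMem_union.1 hx).2,
    intervalSum_insert_right w A (notMem_union.1 hy).2]
  abel

theorem mobiusSum_insert (f : Finset α → Finset α → R) (S : Finset α) {B : Finset α} {z : α}
    (hz : z ∉ B) :
    mobiusSum f S (insert z B) = ∑ T ∈ B.powerset,
      (-1) ^ #T * (f (S ∪ T) (insert z (B \ T)) - f (insert z (S ∪ T)) (B \ T)) := by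
  rw [mobiusSum, sum_powerset_insert hz, ← sum_add_distrib]
  refine sum_congr rfl fun T hT => ?_
  have hzT : z ∉ T := fun h => hz (mem_powerset.1 hT h)
  rw [insert_sdiff_of_notMem _ hzT, insert_sdiff_insert, sdiff_insert_of_notMem hz,
    card_insert_of_notMem hzT, union_insert, pow_succ]
  ring

theorem IsBalanced.mobiusSum_insert_eq {m : ℕ} {f : Finset α → Finset α → R}
    (hf : IsBalanced m f) {S B : Finset α} {x y : α} (hSB : Disjoint S B) (hx : x ∉ S ∪ B)
    (hy : y ∉ S ∪ B) (hcard : #S + #B + 1 = m) :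
    mobiusSum f S (insert x B) = mobiusSum f S (insert y B) := by
  rw [mobiusSum_insert f S (notMem_union.1 hx).2, mobiusSum_insert f S (notMem_union.1 hy).2]
  refine sum_congr rfl fun T hT => ?_
  have hTB := mem_powerset.1 hT
  have hSTB : S ∪ T ∪ B \ T = S ∪ B := by rw [union_assoc, union_sdiff_of_subset hTB]
  have := hf (disjoint_union_sdiff hSB) (hSTB ▸ hx) (hSTB ▸ hy)
    (by rw [card_union_add_card_sdiff_of_subset hSB hTB, hcard])
  linear_combination (-(-1 : R) ^ #T) * this

theorem IsBalanced.mobiusSum_eq {m : ℕ} {f : Finset α → Finset α → R} (hf : IsBalanced m f)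
    {S J J' : Finset α} (hJ : Disjoint S J) (hJ' : Disjoint S J') (hcard : #S + #J = m)
    (hcard' : #S + #J' = m) : mobiusSum f S J = mobiusSum f S J' :=
  eq_of_forall_insert_eq S (m - #S) (mobiusSum f S)
    (fun _ _ _ hB hx hy hc => hf.mobiusSum_insert_eq hB hx hy (by omega)) hJ hJ' (by omega)
    (by omega)

end IntervalSum

namespace Pairs

variable {n k r : ℕ}

theorem prop_of_disjoint (hk : n - r - 1 < k) (hnk : n - r - 1 < n - k)
    {I J : Finset (Fin n)} (hIJ : Disjoint I J) (hcard : #I + #J = n - r - 1) :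
    Disjoint I J ∧ #I + #J = n - r - 1 ∧ #I < k ∧ #J < n - k :=
  ⟨hIJ, hcard, by omega, by omega⟩

def extend (c : Pairs n k r → ℚ) (I J : Finset (Fin n)) : ℚ :=
  if h : Disjoint I J ∧ #I + #J = n - r - 1 ∧ #I < k ∧ #J < n - k then c ⟨(I, J), h⟩ else 0

theorem extend_mk (c : Pairs n k r → ℚ) {I J : Finset (Fin n)}
    (h : Disjoint I J ∧ #I + #J = n - r - 1 ∧ #I < k ∧ #J < n - k) :
    extend c I J = c ⟨(I, J), h⟩ :=
  dif_pos h

theorem extend_val (c : Pairs n k r → ℚ) (p : Pairs n k r) : extend c p.1.1 p.1.2 = c p :=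
  extend_mk c p.2

theorem isBalanced_extend (hk : n - r - 1 < k) (hnk : n - r - 1 < n - k)
    {c : Pairs n k r → ℚ} (hc : IsMinkowskiWeight n k r c) :
    IsBalanced (n - r - 1) (extend c) := by
  intro A B x y hAB hx hy hcard
  obtain rfl | hxy := eq_or_ne x y
  · rw [sub_self, sub_self]
  rw [notMem_union] at hx hy
  rw [extend_mk c (prop_of_disjoint hk hnk (disjoint_insert_left.2 ⟨hx.2, hAB⟩)
      (by rw [card_insert_of_notMem hx.1]; omega)),
    extend_mk c (prop_of_disjoint hk hnk (disjoint_insert_left.2 ⟨hy.2, hAB⟩)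
      (by rw [card_insert_of_notMem hy.1]; omega)),
    extend_mk c (prop_of_disjoint hk hnk (disjoint_insert_right.2 ⟨hx.1, hAB⟩)
      (by rw [card_insert_of_notMem hx.2]; omega)),
    extend_mk c (prop_of_disjoint hk hnk (disjoint_insert_right.2 ⟨hy.1, hAB⟩)
      (by rw [card_insert_of_notMem hy.2]; omega))]
  exact hc.1 _ _ _ _ A B x y hxy (notMem_union.2 hx) (notMem_union.2 hy) (by omega) (by omega)
    rfl rfl rfl rfl

theorem mobiusSum_extend (hk : n - r - 1 < k) (hnk : n - r - 1 < n - k)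
    {c : Pairs n k r → ℚ} {f : Finset (Fin n) → Finset (Fin n) → ℚ}
    (hcf : ∀ p, c p = f p.1.1 p.1.2) {S J : Finset (Fin n)} (hSJ : Disjoint S J)
    (hcard : #S + #J = n - r - 1) : mobiusSum (extend c) S J = mobiusSum f S J := by
  refine sum_congr rfl fun T hT => ?_
  have hTJ := mem_powerset.1 hT
  rw [extend_mk c (prop_of_disjoint hk hnk (disjoint_union_sdiff hSJ)
    (by rw [card_union_add_card_sdiff_of_subset hSJ hTJ, hcard]))]
  exact congrArg _ (hcf _)

end Pairs

namespace MinkowskiWeights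

variable {n k r : ℕ}

theorem isMinkowskiWeight_of_isBalanced (hk : n - r - 1 < k) (hnk : n - r - 1 < n - k)
    {f : Finset (Fin n) → Finset (Fin n) → ℚ} (hf : IsBalanced (n - r - 1) f) :
    IsMinkowskiWeight n k r (fun p => f p.1.1 p.1.2) := by
  refine ⟨fun p q s t A B x y _ hx hy _ _ hp hq hs ht => ?_, fun p q hp hpq => ?_,
    fun p q hp hpq => ?_⟩
  · obtain ⟨hd, hcard, -, -⟩ := p.2
    simp only [hp, hq, hs, ht] at hd hcard ⊢
    rw [disjoint_insert_left] at hd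
    rw [card_insert_of_notMem (notMem_union.1 hx).1] at hcard
    exact hf hd.2 hx hy (by omega)
  · have hp' := p.2.2.1
    have hq' := q.2.2.1
    have hq : #q.1.1 = k - 1 := hpq ▸ hp
    show f p.1.1 p.1.2 = f q.1.1 q.1.2
    rw [hpq, card_eq_zero.1 (by omega : #p.1.2 = 0), card_eq_zero.1 (by omega : #q.1.2 = 0)]
  · have hp' := p.2.2.1
    have hq' := q.2.2.1
    have hq : #q.1.2 = n - k - 1 := hpq ▸ hp
    show f p.1.1 p.1.2 = f q.1.1 q.1.2
    rw [hpq, card_eq_zero.1 (by omega : #p.1.1 = 0), card_eq_zero.1 (by omega : #q.1.1 = 0)]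

noncomputable def ofSubsetWeights (hk : n - r - 1 < k) (hnk : n - r - 1 < n - k) :
    ({S : Finset (Fin n) // #S ≤ n - r - 1} → ℚ) →ₗ[ℚ] MinkowskiWeights n k r where
  toFun w := ⟨fun p => intervalSum (Function.extend Subtype.val w 0) p.1.1 p.1.2,
    isMinkowskiWeight_of_isBalanced hk hnk (isBalanced_intervalSum _ _)⟩
  map_add' w w' := by
    ext p
    simp [intervalSum, ← Function.ExtendByZero.linearMap_apply, sum_add_distrib]
  map_smul' a w := by
    ext p
    simp [intervalSum, ← Function.ExtendByZero.linearMap_apply, mul_sum]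

theorem exists_complement (S : {S : Finset (Fin n) // #S ≤ n - r - 1}) :
    ∃ J, Disjoint S.1 J ∧ #S.1 + #J = n - r - 1 :=
  exists_disjoint_card_add_eq S.2 (by rw [Fintype.card_fin]; omega)

/-- For a Minkowski weight `c` the choice of `J` is irrelevant, by `IsBalanced.mobiusSum_eq`. -/
noncomputable def toSubsetWeights (c : Pairs n k r → ℚ)
    (S : {S : Finset (Fin n) // #S ≤ n - r - 1}) : ℚ :=
  mobiusSum (Pairs.extend c) S.1 (exists_complement S).choose

theorem toSubsetWeights_ofSubsetWeights (hk : n - r - 1 < k) (hnk : n - r - 1 < n - k)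
    (w : {S : Finset (Fin n) // #S ≤ n - r - 1} → ℚ) :
    toSubsetWeights (ofSubsetWeights hk hnk w).1 = w := by
  funext S
  obtain ⟨hSJ, hcard⟩ := (exists_complement S).choose_spec
  rw [toSubsetWeights, Pairs.mobiusSum_extend hk hnk (c := (ofSubsetWeights hk hnk w).1)
      (f := intervalSum (Function.extend Subtype.val w 0)) (fun _ => rfl) hSJ hcard,
    mobiusSum_intervalSum, Subtype.val_injective.extend_apply]

theorem ofSubsetWeights_toSubsetWeights (hk : n - r - 1 < k) (hnk : n - r - 1 < n - k)
    {c : Pairs n k r → ℚ} (hc : c ∈ MinkowskiWeights n k r) :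
    ofSubsetWeights hk hnk (toSubsetWeights c) = ⟨c, hc⟩ := by
  ext p
  change intervalSum (Function.extend Subtype.val (toSubsetWeights c) 0) p.1.1 p.1.2 = c p
  rw [intervalSum_mobiusSum (f := Pairs.extend c), Pairs.extend_val]
  intro T hT
  obtain ⟨hd, hcard, -, -⟩ := p.2
  have hcardT := card_union_add_card_sdiff_of_subset hd hT
  have hS : #(p.1.1 ∪ T) ≤ n - r - 1 := by omega
  obtain ⟨hSJ, hcard'⟩ := (exists_complement ⟨_, hS⟩).choose_spec
  refine (Subtype.val_injective.extend_apply _ _ ⟨p.1.1 ∪ T, hS⟩).trans ?_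
  exact (Pairs.isBalanced_extend hk hnk hc).mobiusSum_eq hSJ (disjoint_union_sdiff hd) hcard'
    (hcardT.trans hcard)

noncomputable def subsetWeightsEquiv (hk : n - r - 1 < k) (hnk : n - r - 1 < n - k) :
    ({S : Finset (Fin n) // #S ≤ n - r - 1} → ℚ) ≃ₗ[ℚ] MinkowskiWeights n k r :=
  { ofSubsetWeights hk hnk with
    invFun := fun c => toSubsetWeights c.1
    left_inv := toSubsetWeights_ofSubsetWeights hk hnk
    right_inv := fun c => ofSubsetWeights_toSubsetWeights hk hnk c.2 }

end MinkowskiWeights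

/-- For `1 ≤ k ≤ ⌊n/2⌋` and `n−k ≤ r ≤ n−1`, the space of `ℚ`-valued Minkowski
weights on codimension-`r` cones of the normal fan of `Δ(k,n)` has dimension
`∑_{i=0}^{n-r-1} C(n,i)`. -/
theorem stmt13 (n k r : ℕ) (hk1 : 1 ≤ k) (hk2 : k ≤ n / 2)
    (hr1 : n - k ≤ r) (hr2 : r ≤ n - 1) :
    Module.finrank ℚ (MinkowskiWeights n k r)
      = ∑ i ∈ Finset.range (n - r), n.choose i := by
  have hkn : k * 2 ≤ n := (Nat.le_div_iff_mul_le two_pos).1 hk2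
  rw [← (MinkowskiWeights.subsetWeightsEquiv (by omega) (by omega)).finrank_eq,
    Module.finrank_fintype_fun_eq_card, Fintype.card_finset_card_le, Fintype.card_fin,
    Nat.sub_add_cancel (by omega : 1 ≤ n - r)]
end

section
/- For 1 ≤ k ≤ ⌊n/2⌋ and 0 ≤ r ≤ k−1, the r-th toric h-number of the dual hypersimplex Δ(k,n)* equals ∑_{i=0}^{r} C(n,i); equivalently, the r-th entry of the usual h-vector computed from face numbers f_j = 2^{j+1} C(n,j+1) for 0 ≤ j ≤ n−2 (with f_{-1} = 1) via h_r = ∑_{j=0}^{r} (−1)^{r−j} C(n−1−j, r−j) f_{j-1} equals ∑_{i=0}^{r} C(n,i). -/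
/-!
Write `2 ^ j * C(n, j) = ∑ᵢ C(n, i) * C(n - i, j - i)` (choose a `j`-set, then an `i`-subset of it)
and read `(-1) ^ m * C(n - r + m - 1, m)` as the generalized binomial coefficient `C(-(n - r), m)`.
After exchanging the sums, the coefficient of `C(n, i)` is, by Vandermonde's identity,
`C(-(n - r) + (n - i), r - i) = C(r - i, r - i) = 1`.
-/

open Finset

-- For `a = 0` the truncated `a + m - 1` still gives the right value, `C(m - 1, m) = C(0, m)`.
theorem Ring.choose_neg_natCast (a m : ℕ) :
    Ring.choose (-(a : ℤ)) m = (-1) ^ m * (a + m - 1).choose m := by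
  rw [Ring.choose_neg, Units.smul_def, Int.coe_negOnePow_natCast, smul_eq_mul]
  rcases Nat.eq_zero_or_pos (a + m) with h | h
  · obtain ⟨rfl, rfl⟩ : a = 0 ∧ m = 0 := by omega
    simp
  · rw [show (a : ℤ) + m - 1 = ((a + m - 1 : ℕ) : ℤ) by omega, Ring.choose_natCast]

theorem sum_range_choose_neg_mul_choose_add (a s : ℕ) :
    ∑ l ∈ range (s + 1), Ring.choose (-(a : ℤ)) (s - l) * (a + s).choose l = 1 := by
  have vandermonde := Ring.add_choose_eq (r := ((a + s : ℕ) : ℤ)) (s := -(a : ℤ)) s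
    (Commute.all _ _)
  rw [show ((a + s : ℕ) : ℤ) + -a = (s : ℕ) by push_cast; ring, Ring.choose_natCast,
    Nat.choose_self, Nat.cast_one, Nat.sum_antidiagonal_eq_sum_range_succ
      (fun l m ↦ Ring.choose ((a + s : ℕ) : ℤ) l * Ring.choose (-(a : ℤ)) m)] at vandermonde
  simp only [Ring.choose_natCast] at vandermonde
  rw [vandermonde]
  exact sum_congr rfl fun l _ ↦ mul_comm _ _

theorem two_pow_mul_choose (n j : ℕ) :
    2 ^ j * n.choose j = ∑ i ∈ range (j + 1), n.choose i * (n - i).choose (j - i) := by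
  rw [← Nat.sum_range_choose, sum_mul]
  refine sum_congr rfl fun i hi ↦ ?_
  rw [mul_comm, Nat.choose_mul (by simpa [Nat.lt_succ_iff] using hi)]

theorem sum_neg_one_pow_mul_choose_mul_two_pow_mul_choose {n r : ℕ} (hrn : r ≤ n) :
    ∑ j ∈ range (r + 1),
        (-1 : ℤ) ^ (r - j) * ((n - 1 - j).choose (r - j)) * (2 ^ j * n.choose j)
      = ∑ i ∈ range (r + 1), (n.choose i : ℤ) := by
  have expand : ∀ j ∈ range (r + 1),
      (-1 : ℤ) ^ (r - j) * ((n - 1 - j).choose (r - j)) * (2 ^ j * n.choose j)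
        = ∑ i ∈ Ico 0 (j + 1), (n.choose i : ℤ) *
            (Ring.choose (-(n - r : ℕ) : ℤ) (r - j) * (n - i).choose (j - i)) := by
    intro j hj
    have hjr : j ≤ r := Nat.lt_succ_iff.mp (mem_range.mp hj)
    rw [Ring.choose_neg_natCast, show n - r + (r - j) - 1 = n - 1 - j by omega,
      ← Nat.cast_two, ← Nat.cast_pow, ← Nat.cast_mul, two_pow_mul_choose, ← range_eq_Ico,
      Nat.cast_sum, mul_sum]
    refine sum_congr rfl fun i _ ↦ ?_
    push_cast
    ring
  rw [sum_congr rfl expand, range_eq_Ico, ← sum_Ico_Ico_comm]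
  refine sum_congr rfl fun i hi ↦ ?_
  have hir : i ≤ r := Nat.lt_succ_iff.mp (mem_Ico.mp hi).2
  rw [← mul_sum, sum_Ico_eq_sum_range, show r + 1 - i = r - i + 1 by omega]
  have inner : ∑ l ∈ range (r - i + 1),
      Ring.choose (-(n - r : ℕ) : ℤ) (r - (i + l)) * (n - i).choose (i + l - i) = 1 := by
    rw [← sum_range_choose_neg_mul_choose_add (n - r) (r - i)]
    refine sum_congr rfl fun l _ ↦ ?_
    rw [show r - (i + l) = r - i - l by omega, show n - r + (r - i) = n - i by omega,
      Nat.add_sub_cancel_left]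
  rw [inner, mul_one]

theorem stmt15_general (n k r : ℕ) (hk2 : k ≤ n / 2) (hr : r ≤ k - 1) :
    ∑ j ∈ Finset.range (r + 1),
        (-1 : ℤ) ^ (r - j) * ((n - 1 - j).choose (r - j)) * (2 ^ j * n.choose j)
      = ∑ i ∈ Finset.range (r + 1), (n.choose i : ℤ) :=
  sum_neg_one_pow_mul_choose_mul_two_pow_mul_choose (by omega)

/-- For `1 ≤ k ≤ ⌊n/2⌋` and `0 ≤ r ≤ k−1`, the `r`-th toric h-number of the
dual hypersimplex `Δ(k,n)*`, computed from the face numbers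
`f_{j-1} = 2^j·C(n,j)` via `h_r = ∑_{j=0}^{r} (−1)^{r−j} C(n−1−j, r−j) f_{j-1}`,
equals `∑_{i=0}^{r} C(n,i)`. -/
theorem stmt15 (n k r : ℕ) (hk1 : 1 ≤ k) (hk2 : k ≤ n / 2) (hr : r ≤ k - 1) :
    ∑ j ∈ Finset.range (r + 1),
        (-1 : ℤ) ^ (r - j) * ((n - 1 - j).choose (r - j)) * (2 ^ j * n.choose j)
      = ∑ i ∈ Finset.range (r + 1), (n.choose i : ℤ) :=
  stmt15_general n k r hk2 hr
end

section
/- For odd n ≥ 3, the polytope obtained by intersecting the cube [−1,1]^n with the hyperplane {x : x_1 + ... + x_n = 0} is a simple polytope of dimension n−1: every vertex lies on exactly n−1 facets. -/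
/-!
An extreme point `v` of the slice has at most one coordinate with `|v i| < 1`: if `v i` and `v j`
were both interior, moving them by `±ε` in opposite directions keeps the sum and stays in the
cube, exhibiting `v` as a midpoint. It has at least one such coordinate, since a `±1` vector with
zero sum has as many `1`s as `-1`s, so an even number of coordinates.
-/

open Finset

def cubeSlice (ι : Type*) [Fintype ι] (c : ℝ) : Set (ι → ℝ) :=
  {x | (∀ i, |x i| ≤ 1) ∧ ∑ i, x i = c}

theorem eq_zero_of_add_mem_of_sub_mem_of_mem_extremePoints {E : Type*} [AddCommGroup E]
    [Module ℝ E] {A : Set E} {v w : E} (hv : v ∈ A.extremePoints ℝ) (hadd : v + w ∈ A)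
    (hsub : v - w ∈ A) : w = 0 := by
  have hmid : v ∈ openSegment ℝ (v + w) (v - w) :=
    ⟨1 / 2, 1 / 2, by norm_num, by norm_num, by norm_num, by module⟩
  simpa using hv.2 hadd hsub hmid

variable {ι : Type*} [Fintype ι] {c : ℝ} {v : ι → ℝ}

theorem card_filter_abs_lt_one_le_one (hv : v ∈ (cubeSlice ι c).extremePoints ℝ) :
    #{i | |v i| < 1} ≤ 1 := by
  classical
  refine card_le_one.2 fun i hi j hj => ?_
  simp only [mem_filter, mem_univ, true_and] at hi hj
  by_contra hij
  set ε := min (1 - |v i|) (1 - |v j|)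
  have hε : 0 < ε := lt_min (by linarith) (by linarith)
  set w : ι → ℝ := Pi.single i ε - Pi.single j ε
  have hw : ∀ k, |w k| ≤ 1 - |v k| := by
    intro k
    by_cases hki : k = i
    · subst hki; simp [w, hij, abs_of_pos hε, ε]
    by_cases hkj : k = j
    · subst hkj; simp [w, hki, abs_of_pos hε, ε]
    · simp [w, hki, hkj, hv.1.1 k]
  have hsum : ∑ k, w k = 0 := by simp [w, sum_sub_distrib]
  have hadd : v + w ∈ cubeSlice ι c := by
    refine ⟨fun k => ?_, ?_⟩
    · exact (abs_add_le _ _).trans (by linarith [hw k])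
    · simp [sum_add_distrib, hsum, hv.1.2]
  have hsub : v - w ∈ cubeSlice ι c := by
    refine ⟨fun k => ?_, ?_⟩
    · exact (abs_sub _ _).trans (by linarith [hw k])
    · simp [sum_sub_distrib, hsum, hv.1.2]
  have hwi := congrFun (eq_zero_of_add_mem_of_sub_mem_of_mem_extremePoints hv hadd hsub) i
  simp [w, hij] at hwi
  exact hε.ne' hwi

theorem even_card_of_sum_eq_zero (hv : ∀ i, v i = 1 ∨ v i = -1) (hsum : ∑ i, v i = 0) :
    Even (Fintype.card ι) := by
  have hcard : (Fintype.card ι : ℝ) = 2 * #{i | v i = 1} := by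
    calc (Fintype.card ι : ℝ) = ∑ i, (1 + v i) := by simp [sum_add_distrib, hsum]
      _ = ∑ i, if v i = 1 then 2 else 0 := by
        refine sum_congr rfl fun i _ => ?_
        rcases hv i with h | h <;> norm_num [h]
      _ = 2 * #{i | v i = 1} := by simp [sum_ite, mul_comm]
  exact ⟨#{i | v i = 1}, by exact_mod_cast hcard.trans (two_mul _)⟩

theorem exists_abs_lt_one_of_mem_cubeSlice (hodd : Odd (Fintype.card ι))
    (hv : v ∈ cubeSlice ι 0) : ∃ i, |v i| < 1 := by
  by_contra! h
  have hpm : ∀ i, v i = 1 ∨ v i = -1 := fun i =>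
    (abs_eq zero_le_one).1 ((hv.1 i).antisymm (h i))
  exact Nat.not_even_iff_odd.2 hodd (even_card_of_sum_eq_zero hpm hv.2)

theorem stmt17_general (n : ℕ) (hodd : Odd n)
    (v : Fin n → ℝ)
    (hv : v ∈ Set.extremePoints ℝ
      {x : Fin n → ℝ | (∀ i, |x i| ≤ 1) ∧ ∑ i, x i = 0}) :
    (Finset.univ.filter (fun i => v i = 1 ∨ v i = -1)).card = n - 1 := by
  have hfacet : ∀ i, (v i = 1 ∨ v i = -1) ↔ ¬ |v i| < 1 := fun i => by
    rw [← abs_eq zero_le_one, not_lt]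
    exact ⟨ge_of_eq, (hv.1.1 i).antisymm⟩
  obtain ⟨i, hi⟩ := exists_abs_lt_one_of_mem_cubeSlice (by simpa using hodd) hv.1
  have hle : #{i | |v i| < 1} ≤ 1 := card_filter_abs_lt_one_le_one hv
  have hpos : 0 < #{i | |v i| < 1} := card_pos.2 ⟨i, by simpa using hi⟩
  have hsplit := card_filter_add_card_filter_not (s := univ) (fun i => |v i| < 1)
  simp only [hfacet, card_univ, Fintype.card_fin] at hsplit ⊢
  omega

/-- For odd `n ≥ 3`, the slice of the cube `[−1,1]^n` by the hyperplane
`x_1 + ⋯ + x_n = 0` is a simple polytope of dimension `n−1`: every vertex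
(extreme point) lies on exactly `n−1` of the facets `{x_i = ±1}`. -/
theorem stmt17 (n : ℕ) (hn : 3 ≤ n) (hodd : Odd n)
    (v : Fin n → ℝ)
    (hv : v ∈ Set.extremePoints ℝ
      {x : Fin n → ℝ | (∀ i, |x i| ≤ 1) ∧ ∑ i, x i = 0}) :
    (Finset.univ.filter (fun i => v i = 1 ∨ v i = -1)).card = n - 1 :=
  stmt17_general n hodd v hv
end
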